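/- Let g : {-1,1}^n → {-1,1} be a Boolean function with Fourier entropy H = H(ĝ²), and let δ ∈ (0,1]. Define the multilinear polynomial p by p̂(S) = ĝ(S) if |ĝ(S)| ≥ 2^{−H/(2δ)} and p̂(S) = 0 otherwise. Then p has at most 2^{H/δ} nonzero Fourier coefficients, and E_x[(g(x) − p(x))²] ≤ δ. -/

import Mathlib

open Finset

/-- The real value (`1` or `-1`) encoded by a Boolean. -/
noncomputable def bsgn (b : Bool) : ℝ := if b then 1 else -1

/-- The character `χ_S(x) = ∏_{i ∈ S} x_i` on the hypercube `{-1,1}^n`. -/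
noncomputable def chi {n : ℕ} (S : Finset (Fin n)) (x : Fin n → Bool) : ℝ :=
  ∏ i ∈ S, bsgn (x i)

/-- The Fourier coefficient `f̂(S) = E_x [f(x)·χ_S(x)]`. -/
noncomputable def fCoeff {n : ℕ} (f : (Fin n → Bool) → ℝ) (S : Finset (Fin n)) : ℝ :=
  (∑ x : Fin n → Bool, f x * chi S x) / 2 ^ n

/-- The Fourier (Shannon) entropy `H(f̂²) = Σ_S f̂(S)² log₂(1/f̂(S)²)`. -/
noncomputable def fEntropy {n : ℕ} (f : (Fin n → Bool) → ℝ) : ℝ :=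
  ∑ S : Finset (Fin n), (fCoeff f S) ^ 2 * Real.logb 2 (1 / (fCoeff f S) ^ 2)

/-- The Fourier min-entropy `H_∞(f̂²) = min_{S : f̂(S) ≠ 0} log₂(1/f̂(S)²)`. -/
noncomputable def fMinEntropy {n : ℕ} (f : (Fin n → Bool) → ℝ) : ℝ :=
  sInf {y : ℝ | ∃ S : Finset (Fin n),
    fCoeff f S ≠ 0 ∧ y = Real.logb 2 (1 / (fCoeff f S) ^ 2)}

/-- The total influence `Inf(f) = Σ_S |S|·f̂(S)²`. -/
noncomputable def totalInf {n : ℕ} (f : (Fin n → Bool) → ℝ) : ℝ :=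
  ∑ S : Finset (Fin n), (S.card : ℝ) * (fCoeff f S) ^ 2

/-- `f` is a Boolean (`±1`-valued) function. -/
def IsBooleanFunc {n : ℕ} (f : (Fin n → Bool) → ℝ) : Prop := ∀ x, f x = 1 ∨ f x = -1

/-!
By Parseval the squares `ĝ(S)²` of a Boolean function form a probability distribution on
subsets. Each kept coefficient carries mass at least `2^{-H/δ}`, so there are at most `2^{H/δ}`
of them. The error `E[(g - p)²]` is the mass of the dropped coefficients, i.e. of the event that
the surprisal `log₂(1/ĝ(S)²)` exceeds `H/δ`; as the surprisal is nonnegative with mean `H`,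
Markov's inequality bounds this mass by `δ`.
-/

lemma chi_eq_prod_ite {n : ℕ} (S : Finset (Fin n)) (x : Fin n → Bool) :
    chi S x = ∏ i, if i ∈ S then bsgn (x i) else 1 := by
  simp [chi]

lemma sum_chi_mul_chi {n : ℕ} (S T : Finset (Fin n)) :
    ∑ x : Fin n → Bool, chi S x * chi T x = if S = T then (2 : ℝ) ^ n else 0 := by
  have hfactor : ∀ i : Fin n,
      ∑ b : Bool, (if i ∈ S then bsgn b else 1) * (if i ∈ T then bsgn b else 1)
        = if (i ∈ S ↔ i ∈ T) then 2 else 0 := by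
    intro i
    by_cases hS : i ∈ S <;> by_cases hT : i ∈ T <;> norm_num [hS, hT, bsgn]
  simp_rw [chi_eq_prod_ite, ← Finset.prod_mul_distrib]
  rw [← Fintype.prod_sum fun i b ↦ (if i ∈ S then bsgn b else 1) * (if i ∈ T then bsgn b else 1),
    Fintype.prod_congr _ _ hfactor, Fintype.prod_ite_zero]
  simp [← Finset.ext_iff]

lemma sum_chi_mul_chi_eval {n : ℕ} (x y : Fin n → Bool) :
    ∑ S : Finset (Fin n), chi S x * chi S y = if x = y then (2 : ℝ) ^ n else 0 := by
  have hfactor : ∀ i : Fin n, 1 + bsgn (x i) * bsgn (y i) = if x i = y i then 2 else 0 := by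
    intro i
    cases x i <;> cases y i <;> norm_num [bsgn]
  simp_rw [chi, ← Finset.prod_mul_distrib]
  rw [← Finset.powerset_univ, ← Finset.prod_one_add, Fintype.prod_congr _ _ hfactor,
    Fintype.prod_ite_zero]
  simp [← funext_iff]

lemma fCoeff_sum_mul_chi {n : ℕ} (c : Finset (Fin n) → ℝ) (T : Finset (Fin n)) :
    fCoeff (fun x ↦ ∑ S, c S * chi S x) T = c T := by
  simp_rw [fCoeff, Finset.sum_mul, mul_assoc]
  rw [Finset.sum_comm]
  simp_rw [← Finset.mul_sum, sum_chi_mul_chi, mul_ite, mul_zero, Finset.sum_ite_eq']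
  simp

lemma sum_fCoeff_mul_chi {n : ℕ} (f : (Fin n → Bool) → ℝ) (x : Fin n → Bool) :
    ∑ S, fCoeff f S * chi S x = f x := by
  simp_rw [fCoeff, div_mul_eq_mul_div, ← Finset.sum_div, Finset.sum_mul, mul_assoc]
  rw [Finset.sum_comm]
  simp_rw [← Finset.mul_sum, mul_comm (chi _ _) (chi _ x), sum_chi_mul_chi_eval, mul_ite,
    mul_zero, Finset.sum_ite_eq]
  simp

lemma sum_mul_chi_eq_fCoeff_mul {n : ℕ} (f : (Fin n → Bool) → ℝ) (S : Finset (Fin n)) :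
    ∑ x, f x * chi S x = fCoeff f S * 2 ^ n := by
  rw [fCoeff, div_mul_cancel₀ _ (by positivity)]

theorem sum_fCoeff_sq {n : ℕ} (f : (Fin n → Bool) → ℝ) :
    ∑ S, fCoeff f S ^ 2 = (∑ x, f x ^ 2) / 2 ^ n := by
  rw [eq_div_iff (by positivity)]
  calc (∑ S, fCoeff f S ^ 2) * 2 ^ n = ∑ S, fCoeff f S * ∑ x, f x * chi S x := by
        simp_rw [Finset.sum_mul, sum_mul_chi_eq_fCoeff_mul, sq, mul_assoc]
    _ = ∑ x, f x * ∑ S, fCoeff f S * chi S x := by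
        simp_rw [Finset.mul_sum]
        rw [Finset.sum_comm]
        exact Finset.sum_congr rfl fun x _ ↦ Finset.sum_congr rfl fun S _ ↦ by ring
    _ = ∑ x, f x ^ 2 := by simp_rw [sum_fCoeff_mul_chi, sq]

lemma fCoeff_sub {n : ℕ} (f g : (Fin n → Bool) → ℝ) (S : Finset (Fin n)) :
    fCoeff (fun x ↦ f x - g x) S = fCoeff f S - fCoeff g S := by
  simp only [fCoeff, sub_mul, Finset.sum_sub_distrib, sub_div]

lemma IsBooleanFunc.sum_fCoeff_sq_eq_one {n : ℕ} {f : (Fin n → Bool) → ℝ}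
    (hf : IsBooleanFunc f) : ∑ S, fCoeff f S ^ 2 = 1 := by
  have hsq : ∀ x, f x ^ 2 = 1 := fun x ↦ by rcases hf x with h | h <;> simp [h]
  simp [sum_fCoeff_sq, hsq]

/-- Markov's inequality; the strict threshold keeps it true when `E = 0`. -/
theorem Finset.sum_filter_div_lt_le {ι : Type*} (s : Finset ι) {q X : ι → ℝ} {E δ : ℝ}
    (hq : ∀ i ∈ s, 0 ≤ q i) (hqX : ∀ i ∈ s, 0 ≤ q i * X i) (hE : ∑ i ∈ s, q i * X i ≤ E)
    (hδ : 0 < δ) : ∑ i ∈ s with E / δ < X i, q i ≤ δ := by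
  by_contra! hlt
  have hsub : s.filter (fun i ↦ E / δ < X i) ⊆ s := Finset.filter_subset _ _
  obtain ⟨i, hi, hqi⟩ : ∃ i ∈ s.filter (fun i ↦ E / δ < X i), 0 < q i := by
    by_contra! h
    exact (Finset.sum_nonpos h).not_gt (hδ.trans hlt)
  have hE0 : 0 ≤ E := (Finset.sum_nonneg hqX).trans hE
  have : E < E := calc
    E = δ * (E / δ) := by field_simp
    _ ≤ (∑ i ∈ s with E / δ < X i, q i) * (E / δ) := by gcongr
    _ = ∑ i ∈ s with E / δ < X i, q i * (E / δ) := Finset.sum_mul _ _ _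
    _ < ∑ i ∈ s with E / δ < X i, q i * X i := by
        refine Finset.sum_lt_sum (fun j hj ↦ ?_) ⟨i, hi, ?_⟩
        · exact mul_le_mul_of_nonneg_left (Finset.mem_filter.1 hj).2.le (hq j (hsub hj))
        · exact mul_lt_mul_of_pos_left (Finset.mem_filter.1 hi).2 hqi
    _ ≤ ∑ i ∈ s, q i * X i := Finset.sum_le_sum_of_subset_of_nonneg hsub fun j hj _ ↦ hqX j hj
    _ ≤ E := hE
  exact this.false

lemma rpow_neg_half_le_abs_iff {b t a : ℝ} (hb : 1 < b) (ha : a ≠ 0) :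
    b ^ (-t / 2) ≤ |a| ↔ Real.logb b (1 / a ^ 2) ≤ t := by
  rw [← Real.le_logb_iff_rpow_le hb (abs_pos.2 ha), Real.logb_abs, one_div, Real.logb_inv,
    Real.logb_pow]
  push_cast
  constructor <;> intro h <;> linarith

lemma mul_logb_one_div_nonneg {b x : ℝ} (hb : 1 < b) (hx0 : 0 ≤ x) (hx1 : x ≤ 1) :
    0 ≤ x * Real.logb b (1 / x) := by
  rcases hx0.eq_or_lt with rfl | hx
  · simp
  · exact mul_nonneg hx.le (Real.logb_nonneg hb (one_le_one_div hx hx1))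

lemma IsBooleanFunc.card_filter_le_abs_fCoeff_le {n : ℕ} {f : (Fin n → Bool) → ℝ}
    (hf : IsBooleanFunc f) (t : ℝ) :
    (#{S | (2 : ℝ) ^ (-t / 2) ≤ |fCoeff f S|} : ℝ) ≤ 2 ^ t := by
  have hsq : ∀ S ∈ ({S | (2 : ℝ) ^ (-t / 2) ≤ |fCoeff f S|} : Finset _),
      (2 : ℝ) ^ (-t) ≤ fCoeff f S ^ 2 := by
    intro S hS
    rw [← sq_abs, show -t = -t / 2 * (2 : ℕ) by push_cast; ring,
      Real.rpow_mul_natCast zero_le_two]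
    gcongr
    exact (Finset.mem_filter.1 hS).2
  have hcard : (#{S | (2 : ℝ) ^ (-t / 2) ≤ |fCoeff f S|} : ℝ) * 2 ^ (-t) ≤ 1 := calc
    _ ≤ ∑ S with (2 : ℝ) ^ (-t / 2) ≤ |fCoeff f S|, fCoeff f S ^ 2 := by
        rw [← nsmul_eq_mul]
        exact Finset.card_nsmul_le_sum _ _ _ hsq
    _ ≤ ∑ S, fCoeff f S ^ 2 :=
        Finset.sum_le_sum_of_subset_of_nonneg (Finset.filter_subset _ _) fun _ _ _ ↦ sq_nonneg _
    _ = 1 := hf.sum_fCoeff_sq_eq_one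
  rwa [Real.rpow_neg zero_le_two, ← div_eq_mul_inv, div_le_one (by positivity)] at hcard

lemma IsBooleanFunc.fEntropy_term_nonneg {n : ℕ} {f : (Fin n → Bool) → ℝ}
    (hf : IsBooleanFunc f) (S : Finset (Fin n)) :
    0 ≤ fCoeff f S ^ 2 * Real.logb 2 (1 / fCoeff f S ^ 2) := by
  refine mul_logb_one_div_nonneg one_lt_two (sq_nonneg _) ?_
  rw [← hf.sum_fCoeff_sq_eq_one]
  exact Finset.single_le_sum (fun T _ ↦ sq_nonneg (fCoeff f T)) (Finset.mem_univ S)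

lemma IsBooleanFunc.sum_sq_filter_abs_fCoeff_lt_le {n : ℕ} {f : (Fin n → Bool) → ℝ}
    (hf : IsBooleanFunc f) {δ : ℝ} (hδ : 0 < δ) :
    ∑ S with |fCoeff f S| < (2 : ℝ) ^ (-(fEntropy f / δ) / 2), fCoeff f S ^ 2 ≤ δ := calc
  _ = ∑ S ∈ {S | |fCoeff f S| < (2 : ℝ) ^ (-(fEntropy f / δ) / 2)} with fCoeff f S ^ 2 ≠ 0,
        fCoeff f S ^ 2 := (Finset.sum_filter_ne_zero _).symm
  _ ≤ ∑ S with fEntropy f / δ < Real.logb 2 (1 / fCoeff f S ^ 2), fCoeff f S ^ 2 := by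
      refine Finset.sum_le_sum_of_subset_of_nonneg (fun S hS ↦ ?_) fun _ _ _ ↦ sq_nonneg _
      simp only [Finset.mem_filter, Finset.mem_univ, true_and, ne_eq, pow_eq_zero_iff,
        OfNat.ofNat_ne_zero, not_false_eq_true] at hS ⊢
      exact not_le.1 fun h ↦ hS.1.not_ge ((rpow_neg_half_le_abs_iff one_lt_two hS.2).2 h)
  _ ≤ δ := Finset.sum_filter_div_lt_le _ (fun _ _ ↦ sq_nonneg _)
      (fun S _ ↦ hf.fEntropy_term_nonneg S) le_rfl hδ

theorem stmt13_general {n : ℕ} (g : (Fin n → Bool) → ℝ) (hg : IsBooleanFunc g)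
    (δ : ℝ) (hδ0 : 0 < δ)
    (p : (Fin n → Bool) → ℝ)
    (hp : ∀ x, p x = ∑ S : Finset (Fin n),
      (if (2 : ℝ) ^ (-(fEntropy g) / (2 * δ)) ≤ |fCoeff g S| then fCoeff g S else 0)
        * chi S x) :
    ((Finset.univ.filter (fun S : Finset (Fin n) => fCoeff p S ≠ 0)).card : ℝ)
        ≤ (2 : ℝ) ^ (fEntropy g / δ) ∧
    (∑ x : Fin n → Bool, (g x - p x) ^ 2) / 2 ^ n ≤ δ := by
  rw [show -fEntropy g / (2 * δ) = -(fEntropy g / δ) / 2 by ring] at hp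
  set θ : ℝ := 2 ^ (-(fEntropy g / δ) / 2)
  have hfCoeff_p : ∀ S, fCoeff p S = if θ ≤ |fCoeff g S| then fCoeff g S else 0 := by
    rw [funext hp]
    exact fCoeff_sum_mul_chi _
  constructor
  · refine le_trans ?_ (hg.card_filter_le_abs_fCoeff_le _)
    gcongr with S
    rw [hfCoeff_p]
    exact fun h ↦ by_contra fun hlt ↦ h (if_neg hlt)
  · calc (∑ x, (g x - p x) ^ 2) / 2 ^ n = ∑ S, (fCoeff g S - fCoeff p S) ^ 2 := by
          simp_rw [← sum_fCoeff_sq, fCoeff_sub]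
      _ = ∑ S with |fCoeff g S| < θ, fCoeff g S ^ 2 := by
          rw [Finset.sum_filter]
          refine Finset.sum_congr rfl fun S _ ↦ ?_
          by_cases h : θ ≤ |fCoeff g S|
          · simp [hfCoeff_p, h, not_lt.2 h]
          · simp [hfCoeff_p, h, not_le.1 h]
      _ ≤ δ := hg.sum_sq_filter_abs_fCoeff_lt_le hδ0

/-- Let `g` be Boolean with Fourier entropy `H = H(ĝ²)` and `δ ∈ (0,1]`.
Define the multilinear polynomial `p` by keeping exactly the Fourier coefficients of `g`
of absolute value at least `2^{-H/(2δ)}` (i.e. `p̂(S) = ĝ(S)` for those `S` and `0`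
otherwise).  Then `p` has at most `2^{H/δ}` nonzero Fourier coefficients and
`E_x[(g(x) − p(x))²] ≤ δ`. -/
theorem stmt13 {n : ℕ} (g : (Fin n → Bool) → ℝ) (hg : IsBooleanFunc g)
    (δ : ℝ) (hδ0 : 0 < δ) (hδ1 : δ ≤ 1)
    (p : (Fin n → Bool) → ℝ)
    (hp : ∀ x, p x = ∑ S : Finset (Fin n),
      (if (2 : ℝ) ^ (-(fEntropy g) / (2 * δ)) ≤ |fCoeff g S| then fCoeff g S else 0)
        * chi S x) :
    ((Finset.univ.filter (fun S : Finset (Fin n) => fCoeff p S ≠ 0)).card : ℝ)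
        ≤ (2 : ℝ) ^ (fEntropy g / δ) ∧
    (∑ x : Fin n → Bool, (g x - p x) ^ 2) / 2 ^ n ≤ δ :=
  stmt13_general g hg δ hδ0 p hp
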